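/- Fix n ∈ ℕ, an adjacency parameter A ∈ ℕ with A ≥ 1, and a privacy parameter ε ≥ 0, and let p = 1/(1 + exp(−ε/A)). The modified Erdős–Rényi model is ε-differentially private: for all graphs G, G' on n nodes with d_Δ(E(G), E(G')) ≤ A and every candidate output graph H on n nodes, p^{N − d(G,H)} · (1 − p)^{d(G,H)} ≤ exp(ε) · p^{N − d(G',H)} · (1 − p)^{d(G',H)}, where N = C(n,2), d(G,H) = d_Δ(E(G), E(H)), and d(G',H) = d_Δ(E(G'), E(H)). -/

import Mathlib

/-!
With `q = exp(-ε/A)` one has `1 - p = p q`, so the likelihood of `H` given `G` is `p^N q^{d(G,H)}`.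
By the triangle inequality for `d_Δ`, `d(G',H) ≤ d(G,H) + A`, and since `q ≤ 1` the likelihood
ratio is at most `q^{-A} = exp ε`.
-/

/-- The set `K_n` of all `C(n,2)` unordered pairs of distinct nodes of `Fin n`.
A simple undirected graph on `n` nodes is identified with its edge set, a subset of `Kn n`. -/
def Kn (n : ℕ) : Finset (Sym2 (Fin n)) := Finset.univ.filter (fun e => ¬ e.IsDiag)

open Real

lemma card_Kn (n : ℕ) : (Kn n).card = n.choose 2 := by
  have := Sym2.card_subtype_not_diag (α := Fin n)
  rwa [Fintype.card_subtype, Fintype.card_fin] at this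

lemma card_symmDiff_le_choose {n : ℕ} {G H : Finset (Sym2 (Fin n))} (hG : G ⊆ Kn n)
    (hH : H ⊆ Kn n) : (symmDiff G H).card ≤ n.choose 2 :=
  card_Kn n ▸ Finset.card_le_card (symmDiff_le_sup.trans (sup_le hG hH))

lemma Finset.card_symmDiff_le_add {α : Type*} [DecidableEq α] (s t u : Finset α) :
    (symmDiff t u).card ≤ (symmDiff s t).card + (symmDiff s u).card := by
  calc (symmDiff t u).card ≤ (symmDiff t s ∪ symmDiff s u).card :=
        Finset.card_le_card (symmDiff_triangle t s u)
    _ ≤ (symmDiff s t).card + (symmDiff s u).card := by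
        rw [symmDiff_comm t s]; exact Finset.card_union_le _ _

lemma one_sub_one_div_one_add_exp_neg (t : ℝ) :
    1 - 1 / (1 + exp (-t)) = 1 / (1 + exp (-t)) * exp (-t) := by
  have : 0 < 1 + exp (-t) := by positivity
  field_simp
  ring

lemma pow_sub_mul_pow_of_one_sub_eq {R : Type*} [CommRing R] {p q : R} (h : 1 - p = p * q)
    {N k : ℕ} (hk : k ≤ N) : p ^ (N - k) * (1 - p) ^ k = p ^ N * q ^ k := by
  rw [h, mul_pow, ← mul_assoc, ← pow_add, Nat.sub_add_cancel hk]

lemma exp_neg_pow_le_exp_mul_exp_neg_pow {t : ℝ} (ht : 0 ≤ t) {a b A : ℕ} (hb : b ≤ a + A) :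
    exp (-t) ^ a ≤ exp (t * A) * exp (-t) ^ b := by
  have hq : exp (-t) ≤ 1 := exp_le_one_iff.mpr (neg_nonpos.mpr ht)
  have hinv : exp (t * A) * exp (-t) ^ A = 1 := by
    rw [← exp_nat_mul, ← exp_add]; ring_nf; exact exp_zero
  calc exp (-t) ^ a = exp (t * A) * exp (-t) ^ (a + A) := by
        rw [pow_add, mul_left_comm, hinv, mul_one]
    _ ≤ exp (t * A) * exp (-t) ^ b :=
        mul_le_mul_of_nonneg_left (pow_le_pow_of_le_one (exp_pos _).le hq hb) (exp_pos _).le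

/-- **The modified Erdős–Rényi model is `ε`-differentially private.**
Fix `n`, an adjacency parameter `A ≥ 1`, a privacy parameter `ε ≥ 0`, and let
`p = 1/(1 + exp(−ε/A))`. For all graphs `G, G'` on `n` nodes with
`d_Δ(E(G), E(G')) ≤ A` and every candidate output graph `H`,
`p^(N−d(G,H))·(1−p)^(d(G,H)) ≤ exp(ε) · p^(N−d(G',H))·(1−p)^(d(G',H))`,
where `N = C(n,2)` and `d(G,H) = d_Δ(E(G), E(H))`. -/
theorem modified_ER_dp (n A : ℕ) (hA : 1 ≤ A) (ε : ℝ) (hε : 0 ≤ ε)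
    (p : ℝ) (hp : p = 1 / (1 + Real.exp (-ε / A)))
    (G G' H : Finset (Sym2 (Fin n)))
    (hG : G ⊆ Kn n) (hG' : G' ⊆ Kn n) (hH : H ⊆ Kn n)
    (hadj : (symmDiff G G').card ≤ A) :
    p ^ (n.choose 2 - (symmDiff G H).card) * (1 - p) ^ (symmDiff G H).card
      ≤ Real.exp ε *
        (p ^ (n.choose 2 - (symmDiff G' H).card) * (1 - p) ^ (symmDiff G' H).card) := by
  rw [neg_div] at hp
  have h1p : 1 - p = p * exp (-(ε / A)) := hp ▸ one_sub_one_div_one_add_exp_neg _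
  have hεA : ε / A * A = ε := div_mul_cancel₀ ε (Nat.cast_ne_zero.mpr (by omega))
  have htri : (symmDiff G' H).card ≤ (symmDiff G H).card + A :=
    (Finset.card_symmDiff_le_add G G' H).trans (by omega)
  rw [pow_sub_mul_pow_of_one_sub_eq h1p (card_symmDiff_le_choose hG hH),
    pow_sub_mul_pow_of_one_sub_eq h1p (card_symmDiff_le_choose hG' hH), mul_left_comm]
  gcongr
  · exact (pow_pos (hp ▸ by positivity) _).le
  · simpa only [hεA] using exp_neg_pow_le_exp_mul_exp_neg_pow (t := ε / A) (by positivity) htri
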